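/- Under Assumptions IV and weak monotonicity, and with covariates given by indicators of a finite partition with a fully saturated first stage (instruments Z interacted with all group indicators), the 2SLS estimand satisfies β_2SLS = E[π(X)² · Var[Z|X] · τ(X)] / E[π(X)² · Var[Z|X]]. In particular β_2SLS is a convex combination of the conditional LATEs τ(x). (Theorem 1.) -/

import Mathlib

open Finset

section Defs

variable {Ω 𝓧 : Type*} [Fintype Ω]

/-- Expectation of `f` under weights `p` on a finite outcome space. -/
noncomputable def pexp (p : Ω → ℝ) (f : Ω → ℝ) : ℝ := ∑ ω, p ω * f ω

open Classical in
/-- Probability of the event `A` under weights `p`. -/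
noncomputable def pprob (p : Ω → ℝ) (A : Ω → Prop) : ℝ := ∑ ω, if A ω then p ω else 0

open Classical in
/-- Conditional expectation of `f` given the event `A`. -/
noncomputable def eexp (p : Ω → ℝ) (A : Ω → Prop) (f : Ω → ℝ) : ℝ :=
  (∑ ω, if A ω then p ω * f ω else 0) / pprob p A

/-- Conditional probability of `A` given `B`. -/
noncomputable def cprob (p : Ω → ℝ) (A B : Ω → Prop) : ℝ :=
  pprob p (fun ω => A ω ∧ B ω) / pprob p B

/-- `p` is a probability vector. -/
def IsProb (p : Ω → ℝ) : Prop := (∀ ω, 0 ≤ p ω) ∧ ∑ ω, p ω = 1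

/-- Conditional expectation of `f` given `X = x`. -/
noncomputable def condMean (p : Ω → ℝ) (X : Ω → 𝓧) (f : Ω → ℝ) (x : 𝓧) : ℝ :=
  eexp p (fun ω => X ω = x) f

/-- Conditional expectation of `f` given `X = x` and `Z = z`. -/
noncomputable def condMeanOn (p : Ω → ℝ) (X : Ω → 𝓧) (Z : Ω → ℝ) (f : Ω → ℝ) (x : 𝓧) (z : ℝ) : ℝ :=
  eexp p (fun ω => X ω = x ∧ Z ω = z) f

/-- Conditional cslope coefficient `E[f | Z=1, X=x] - E[f | Z=0, X=x]`. -/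
noncomputable def cslope (p : Ω → ℝ) (X : Ω → 𝓧) (Z : Ω → ℝ) (f : Ω → ℝ) (x : 𝓧) : ℝ :=
  condMeanOn p X Z f x 1 - condMeanOn p X Z f x 0

/-- Conditional variance of `f` given the event `A`. -/
noncomputable def evVar (p : Ω → ℝ) (A : Ω → Prop) (f : Ω → ℝ) : ℝ :=
  eexp p A (fun ω => (f ω - eexp p A f) ^ 2)

/-- Conditional variance of `f` given `X = x`. -/
noncomputable def condVar (p : Ω → ℝ) (X : Ω → 𝓧) (f : Ω → ℝ) (x : 𝓧) : ℝ :=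
  evVar p (fun ω => X ω = x) f

end Defs

/-!
In each covariate cell `x`, Kolesár's weight `σ²(x)` is the variance of `E[D | X = x, Z]`.
Since `Z` is binary, this between-group variance is `Var[Z | X = x]` times the squared
first-stage slope `E[D | X = x, Z = 1] - E[D | X = x, Z = 0]`. Independence of `Z` and the
potential treatments given `X` turns that slope into `P(D1 = 1 | x) - P(D0 = 1 | x)`, which under
monotonicity is `±π(x)`. Hence `σ²(x) = π(x)² Var[Z | X = x]` cell by cell. Degenerate cells
(null, or with `Z` constant) have `Var[Z | X = x] = 0` and drop out of both sides.
-/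

section FiniteProbability

variable {Ω : Type*} [Fintype Ω] (p : Ω → ℝ)

open Classical in
noncomputable def pintegral (B : Ω → Prop) (f : Ω → ℝ) : ℝ :=
  ∑ ω, if B ω then p ω * f ω else 0

theorem eexp_eq_pintegral_div (B : Ω → Prop) (f : Ω → ℝ) :
    eexp p B f = pintegral p B f / pprob p B := rfl

theorem pprob_congr {A B : Ω → Prop} (h : ∀ ω, A ω ↔ B ω) : pprob p A = pprob p B := by
  simp only [funext fun ω => propext (h ω)]

theorem pintegral_congr {B : Ω → Prop} {f g : Ω → ℝ} (h : ∀ ω, B ω → f ω = g ω) :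
    pintegral p B f = pintegral p B g :=
  Finset.sum_congr rfl fun ω _ => by split_ifs with hB <;> simp [h ω, hB]

theorem pintegral_const (B : Ω → Prop) (c : ℝ) :
    pintegral p B (fun _ => c) = pprob p B * c := by
  rw [pintegral, pprob, Finset.sum_mul]
  exact Finset.sum_congr rfl fun ω _ => by split_ifs <;> simp

theorem pintegral_of_binary {f : Ω → ℝ} (hf : ∀ ω, f ω = 0 ∨ f ω = 1) (B : Ω → Prop) :
    pintegral p B f = pprob p (fun ω => B ω ∧ f ω = 1) :=
  Finset.sum_congr rfl fun ω _ => by rcases hf ω with h | h <;> by_cases hB : B ω <;> simp [h, hB]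

theorem pintegral_split_binary {Z : Ω → ℝ} (hZ : ∀ ω, Z ω = 0 ∨ Z ω = 1) (B : Ω → Prop)
    (f : Ω → ℝ) :
    pintegral p B f =
      pintegral p (fun ω => B ω ∧ Z ω = 1) f + pintegral p (fun ω => B ω ∧ Z ω = 0) f := by
  rw [pintegral, pintegral, pintegral, ← Finset.sum_add_distrib]
  exact Finset.sum_congr rfl fun ω _ => by
    rcases hZ ω with h | h <;> by_cases hB : B ω <;> simp [h, hB]

theorem pprob_split_binary {Z : Ω → ℝ} (hZ : ∀ ω, Z ω = 0 ∨ Z ω = 1) (B : Ω → Prop) :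
    pprob p B = pprob p (fun ω => B ω ∧ Z ω = 1) + pprob p (fun ω => B ω ∧ Z ω = 0) := by
  simpa [pintegral_const] using pintegral_split_binary p hZ B (fun _ => 1)

theorem pintegral_eq_zero_of_pprob_eq_zero (hp : ∀ ω, 0 ≤ p ω) {B : Ω → Prop}
    (hB : pprob p B = 0) (f : Ω → ℝ) : pintegral p B f = 0 := by
  have hnull := (Finset.sum_eq_zero_iff_of_nonneg fun ω _ => by
    split_ifs <;> simp [hp ω]).mp hB
  exact Finset.sum_eq_zero fun ω hω => by simpa using congrArg (· * f ω) (hnull ω hω)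

/-- `B` and `C` are independent given `A`, in a form free of division. -/
def IndepEventsGiven (A B C : Ω → Prop) : Prop :=
  pprob p (fun ω => A ω ∧ B ω ∧ C ω) * pprob p A =
    pprob p (fun ω => A ω ∧ B ω) * pprob p (fun ω => A ω ∧ C ω)

theorem pprob_eq_sum_fiber {β : Type*} [DecidableEq β] (W : Ω → β) (B : Ω → Prop) :
    pprob p B = ∑ w ∈ Finset.univ.image W, pprob p (fun ω => B ω ∧ W ω = w) := by
  unfold pprob
  rw [Finset.sum_comm]
  refine Finset.sum_congr rfl fun ω _ => ?_
  rw [Finset.sum_eq_single (W ω)]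
  · by_cases hB : B ω <;> simp [hB]
  · intro w _ hw
    simp [Ne.symm hw]
  · exact fun h => absurd (Finset.mem_image_of_mem W (Finset.mem_univ ω)) h

theorem pprob_prop_and (P : Prop) [Decidable P] (B : Ω → Prop) :
    pprob p (fun ω => P ∧ B ω) = if P then pprob p B else 0 := by
  by_cases hP : P
  · rw [if_pos hP]
    exact pprob_congr p fun ω => and_iff_right hP
  · rw [if_neg hP]
    exact Finset.sum_eq_zero fun ω _ => if_neg fun h => hP h.1

variable {p} {Z : Ω → ℝ}

theorem IndepEventsGiven.of_forall_fiber {β : Type*} {A C : Ω → Prop} {W : Ω → β}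
    (h : ∀ w, IndepEventsGiven p A (fun ω => W ω = w) C) (S : β → Prop) :
    IndepEventsGiven p A (fun ω => S (W ω)) C := by
  classical
  have fiber : ∀ (B : Ω → Prop) w, pprob p (fun ω => (A ω ∧ S (W ω) ∧ B ω) ∧ W ω = w) =
      if S w then pprob p (fun ω => A ω ∧ W ω = w ∧ B ω) else 0 := fun B w => by
    rw [← pprob_prop_and]
    exact pprob_congr p fun ω => by
      constructor
      · rintro ⟨⟨hA, hS, hB⟩, rfl⟩; exact ⟨hS, hA, rfl, hB⟩
      · rintro ⟨hS, hA, rfl, hB⟩; exact ⟨⟨hA, hS, hB⟩, rfl⟩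
  have fiberTrue := fiber (fun _ => True)
  simp only [and_true] at fiberTrue
  unfold IndepEventsGiven
  rw [pprob_eq_sum_fiber p W (fun ω => A ω ∧ S (W ω) ∧ C ω),
    pprob_eq_sum_fiber p W (fun ω => A ω ∧ S (W ω)), Finset.sum_mul, Finset.sum_mul]
  refine Finset.sum_congr rfl fun w _ => ?_
  rw [fiber, fiberTrue]
  split_ifs
  · exact h w
  · simp

theorem eexp_congr {B : Ω → Prop} {f g : Ω → ℝ} (h : ∀ ω, B ω → f ω = g ω) :
    eexp p B f = eexp p B g := by
  rw [eexp_eq_pintegral_div, eexp_eq_pintegral_div, pintegral_congr p h]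

theorem eexp_and_of_indepEventsGiven {A C : Ω → Prop} {f : Ω → ℝ}
    (hf : ∀ ω, f ω = 0 ∨ f ω = 1) (hind : IndepEventsGiven p A (fun ω => f ω = 1) C)
    (hA : pprob p A ≠ 0) (hAC : pprob p (fun ω => A ω ∧ C ω) ≠ 0) :
    eexp p (fun ω => A ω ∧ C ω) f = cprob p (fun ω => f ω = 1) A := by
  rw [eexp_eq_pintegral_div, pintegral_of_binary p hf, cprob, div_eq_div_iff hAC hA,
    pprob_congr p (B := fun ω => A ω ∧ f ω = 1) fun _ => and_comm, ← hind]
  exact congrArg (· * _) (pprob_congr p fun _ => by tauto)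

theorem cprob_sub_cprob_of_le (hp : ∀ ω, 0 ≤ p ω) {a b : Ω → ℝ} (ha : ∀ ω, a ω = 0 ∨ a ω = 1)
    (hb : ∀ ω, b ω = 0 ∨ b ω = 1) {A : Ω → Prop} (hab : ∀ ω, 0 < p ω → A ω → a ω ≤ b ω) :
    cprob p (fun ω => b ω = 1) A - cprob p (fun ω => a ω = 1) A =
      cprob p (fun ω => b ω ≠ a ω) A := by
  rw [cprob, cprob, cprob, ← sub_div, pprob, pprob, pprob, ← Finset.sum_sub_distrib]
  congr 1
  refine Finset.sum_congr rfl fun ω _ => ?_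
  rcases (hp ω).eq_or_lt with hnull | hpos
  · simp [← hnull]
  by_cases hA : A ω
  · have hle := hab ω hpos hA
    rcases ha ω with h | h <;> rcases hb ω with h' | h' <;> simp [h, h', hA]
    linarith
  · simp [hA]

theorem eexp_comp_of_binary (hZ : ∀ ω, Z ω = 0 ∨ Z ω = 1) (A : Ω → Prop) (g : ℝ → ℝ) :
    eexp p A (fun ω => g (Z ω)) =
      (pprob p (fun ω => A ω ∧ Z ω = 1) * g 1 + pprob p (fun ω => A ω ∧ Z ω = 0) * g 0) /
        pprob p A := by
  rw [eexp_eq_pintegral_div, pintegral_split_binary p hZ,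
    pintegral_congr p (B := fun ω => A ω ∧ Z ω = 1) (g := fun _ => g 1) fun ω h => by rw [h.2],
    pintegral_congr p (B := fun ω => A ω ∧ Z ω = 0) (g := fun _ => g 0) fun ω h => by rw [h.2],
    pintegral_const, pintegral_const]

theorem evVar_of_binary (hZ : ∀ ω, Z ω = 0 ∨ Z ω = 1) (A : Ω → Prop) :
    evVar p A Z =
      pprob p (fun ω => A ω ∧ Z ω = 1) * pprob p (fun ω => A ω ∧ Z ω = 0) / pprob p A ^ 2 := by
  have hmean : eexp p A Z = pprob p (fun ω => A ω ∧ Z ω = 1) / pprob p A := by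
    rw [eexp_eq_pintegral_div, pintegral_of_binary p hZ]
  rw [evVar, hmean, eexp_comp_of_binary hZ A (fun z => (z - _) ^ 2),
    pprob_split_binary p hZ A]
  by_cases h : pprob p (fun ω => A ω ∧ Z ω = 1) + pprob p (fun ω => A ω ∧ Z ω = 0) = 0
  · simp [h]
  · field_simp
    ring

-- `u / a` is a junk mean when `a = 0`; `hu` says such a cell carries no mass either.
theorem two_point_between_variance {a b u v : ℝ} (hu : a = 0 → u = 0) (hv : b = 0 → v = 0) :
    (a * (u / a - (u + v) / (a + b)) ^ 2 + b * (v / b - (u + v) / (a + b)) ^ 2) / (a + b) =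
      a * b / (a + b) ^ 2 * (u / a - v / b) ^ 2 := by
  rcases eq_or_ne a 0 with rfl | ha
  · simp [hu rfl]
  rcases eq_or_ne b 0 with rfl | hb
  · simp [hv rfl]
  rcases eq_or_ne (a + b) 0 with hab | hab
  · simp [hab]
  field_simp
  ring

theorem eexp_sq_eexp_sub_eq_evVar_mul (hp : ∀ ω, 0 ≤ p ω) (hZ : ∀ ω, Z ω = 0 ∨ Z ω = 1)
    (A : Ω → Prop) (f : Ω → ℝ) :
    eexp p A (fun ω => (eexp p (fun ω' => A ω' ∧ Z ω' = Z ω) f - eexp p A f) ^ 2) =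
      evVar p A Z *
        (eexp p (fun ω => A ω ∧ Z ω = 1) f - eexp p (fun ω => A ω ∧ Z ω = 0) f) ^ 2 := by
  have hmean : eexp p A f =
      (pintegral p (fun ω => A ω ∧ Z ω = 1) f + pintegral p (fun ω => A ω ∧ Z ω = 0) f) /
        (pprob p (fun ω => A ω ∧ Z ω = 1) + pprob p (fun ω => A ω ∧ Z ω = 0)) := by
    rw [eexp_eq_pintegral_div, pintegral_split_binary p hZ, pprob_split_binary p hZ]
  rw [eexp_comp_of_binary hZ A (fun z => (eexp p (fun ω' => A ω' ∧ Z ω' = z) f - _) ^ 2),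
    evVar_of_binary hZ, hmean, pprob_split_binary p hZ A, eexp_eq_pintegral_div,
    eexp_eq_pintegral_div]
  exact two_point_between_variance (fun h => pintegral_eq_zero_of_pprob_eq_zero p hp h f)
    (fun h => pintegral_eq_zero_of_pprob_eq_zero p hp h f)

end FiniteProbability

section Instrument

variable {Ω 𝓧 : Type*} [Fintype Ω] {p : Ω → ℝ} {X : Ω → 𝓧} {Z D0 D1 D : Ω → ℝ} {x : 𝓧}

theorem cslope_eq_cprob_sub_cprob (hD0 : ∀ ω, D0 ω = 0 ∨ D0 ω = 1)
    (hD1 : ∀ ω, D1 ω = 0 ∨ D1 ω = 1) (hD : ∀ ω, D ω = if Z ω = 1 then D1 ω else D0 ω)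
    (hind1 : IndepEventsGiven p (fun ω => X ω = x) (fun ω => D1 ω = 1) (fun ω => Z ω = 1))
    (hind0 : IndepEventsGiven p (fun ω => X ω = x) (fun ω => D0 ω = 1) (fun ω => Z ω = 0))
    (hx : pprob p (fun ω => X ω = x) ≠ 0) (hx1 : pprob p (fun ω => X ω = x ∧ Z ω = 1) ≠ 0)
    (hx0 : pprob p (fun ω => X ω = x ∧ Z ω = 0) ≠ 0) :
    cslope p X Z D x =
      cprob p (fun ω => D1 ω = 1) (fun ω => X ω = x) -
        cprob p (fun ω => D0 ω = 1) (fun ω => X ω = x) := by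
  rw [cslope, condMeanOn, condMeanOn,
    eexp_congr (B := fun ω => X ω = x ∧ Z ω = 1) (g := D1) fun ω h => by rw [hD, if_pos h.2],
    eexp_congr (B := fun ω => X ω = x ∧ Z ω = 0) (g := D0) fun ω h => by
      rw [hD, if_neg (by rw [h.2]; norm_num)],
    eexp_and_of_indepEventsGiven hD1 hind1 hx hx1, eexp_and_of_indepEventsGiven hD0 hind0 hx hx0]

theorem condVar_mul_cslope_sq_of_monotone (hp : ∀ ω, 0 ≤ p ω) (hZ : ∀ ω, Z ω = 0 ∨ Z ω = 1)
    (hD0 : ∀ ω, D0 ω = 0 ∨ D0 ω = 1) (hD1 : ∀ ω, D1 ω = 0 ∨ D1 ω = 1)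
    (hD : ∀ ω, D ω = if Z ω = 1 then D1 ω else D0 ω)
    (hind1 : IndepEventsGiven p (fun ω => X ω = x) (fun ω => D1 ω = 1) (fun ω => Z ω = 1))
    (hind0 : IndepEventsGiven p (fun ω => X ω = x) (fun ω => D0 ω = 1) (fun ω => Z ω = 0))
    (hmono : (∀ ω, 0 < p ω → X ω = x → D0 ω ≤ D1 ω) ∨ (∀ ω, 0 < p ω → X ω = x → D1 ω ≤ D0 ω)) :
    condVar p X Z x * cslope p X Z D x ^ 2 =
      cprob p (fun ω => D1 ω ≠ D0 ω) (fun ω => X ω = x) ^ 2 * condVar p X Z x := by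
  by_cases hV : condVar p X Z x = 0
  · simp [hV]
  simp only [condVar, evVar_of_binary hZ, div_ne_zero_iff, mul_ne_zero_iff, ne_eq,
    pow_eq_zero_iff, OfNat.ofNat_ne_zero, not_false_eq_true] at hV
  obtain ⟨⟨hx1, hx0⟩, hx⟩ := hV
  rw [cslope_eq_cprob_sub_cprob hD0 hD1 hD hind1 hind0 hx hx1 hx0, mul_comm]
  congr 1
  rcases hmono with hle | hle
  · rw [cprob_sub_cprob_of_le hp hD0 hD1 hle]
  · rw [← neg_sub, neg_sq, cprob_sub_cprob_of_le hp hD1 hD0 hle, cprob, cprob,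
      pprob_congr p fun ω => by rw [ne_comm]]

end Instrument

theorem stmt8_general {Ω 𝓧 : Type*} [Fintype Ω] (p : Ω → ℝ) (hp : IsProb p)
    (X : Ω → 𝓧) (Z D0 D1 Y0 Y1 : Ω → ℝ)
    (hZ : ∀ ω, Z ω = 0 ∨ Z ω = 1)
    (hD0 : ∀ ω, D0 ω = 0 ∨ D0 ω = 1) (hD1 : ∀ ω, D1 ω = 0 ∨ D1 ω = 1)
    (hindep : ∀ (x : 𝓧) (y0 y1 d0 d1 z : ℝ),
      pprob p (fun ω => X ω = x ∧ Y0 ω = y0 ∧ Y1 ω = y1 ∧ D0 ω = d0 ∧ D1 ω = d1 ∧ Z ω = z) *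
          pprob p (fun ω => X ω = x)
        = pprob p (fun ω => X ω = x ∧ Y0 ω = y0 ∧ Y1 ω = y1 ∧ D0 ω = d0 ∧ D1 ω = d1) *
            pprob p (fun ω => X ω = x ∧ Z ω = z))
    (hmono : ∀ x : 𝓧,
      (∀ ω, 0 < p ω → X ω = x → D0 ω ≤ D1 ω) ∨
      (∀ ω, 0 < p ω → X ω = x → D1 ω ≤ D0 ω))
    (D : Ω → ℝ)
    (hD : ∀ ω, D ω = if Z ω = 1 then D1 ω else D0 ω)
    (β2SLS : ℝ)
    -- Kolesár's lemma for the saturated 2SLS specification, taken as given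
    (hKolesar : β2SLS =
      pexp p (fun ω =>
          eexp p (fun ω' => X ω' = X ω)
              (fun ω' => (condMeanOn p X Z D (X ω) (Z ω') - condMean p X D (X ω)) ^ 2) *
            eexp p (fun ω' => D1 ω' ≠ D0 ω' ∧ X ω' = X ω) (fun ω' => Y1 ω' - Y0 ω')) /
        pexp p (fun ω =>
          eexp p (fun ω' => X ω' = X ω)
              (fun ω' => (condMeanOn p X Z D (X ω) (Z ω') - condMean p X D (X ω)) ^ 2))) :
    β2SLS =
      pexp p (fun ω =>
          (cprob p (fun ω' => D1 ω' ≠ D0 ω') (fun ω' => X ω' = X ω)) ^ 2 *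
            condVar p X Z (X ω) *
            eexp p (fun ω' => D1 ω' ≠ D0 ω' ∧ X ω' = X ω) (fun ω' => Y1 ω' - Y0 ω')) /
        pexp p (fun ω =>
          (cprob p (fun ω' => D1 ω' ≠ D0 ω') (fun ω' => X ω' = X ω)) ^ 2 *
            condVar p X Z (X ω)) := by
  have hfiber : ∀ x (w : ℝ × ℝ × ℝ × ℝ) z, IndepEventsGiven p (fun ω => X ω = x)
      (fun ω => (Y0 ω, Y1 ω, D0 ω, D1 ω) = w) (fun ω => Z ω = z) := by
    rintro x ⟨y0, y1, d0, d1⟩ z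
    simpa only [IndepEventsGiven, Prod.mk.injEq, and_assoc] using hindep x y0 y1 d0 d1 z
  have hfirstStage : ∀ x, eexp p (fun ω => X ω = x)
      (fun ω => (condMeanOn p X Z D x (Z ω) - condMean p X D x) ^ 2) =
        cprob p (fun ω => D1 ω ≠ D0 ω) (fun ω => X ω = x) ^ 2 * condVar p X Z x := fun x =>
    (eexp_sq_eexp_sub_eq_evVar_mul hp.1 hZ _ D).trans <|
      condVar_mul_cslope_sq_of_monotone hp.1 hZ hD0 hD1 hD
        (IndepEventsGiven.of_forall_fiber (fun w => hfiber x w 1) fun w => w.2.2.2 = 1)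
        (IndepEventsGiven.of_forall_fiber (fun w => hfiber x w 0) fun w => w.2.2.1 = 1)
        (hmono x)
  rw [hKolesar]
  simp only [hfirstStage]

/-- Theorem 1: under Assumption IV, weak monotonicity, and the
saturated Angrist–Imbens (1995) specification, given Kolesár's lemma
`β_2SLS = E[σ²(X)·τ(X)]/E[σ²(X)]` with
`σ²(X) = E[(E[D|X,Z] - E[D|X])² | X]`, the 2SLS estimand satisfies
`β_2SLS = E[π(X)²·Var[Z|X]·τ(X)] / E[π(X)²·Var[Z|X]]`, a convex combination of
the conditional LATEs. -/
theorem stmt8 {Ω 𝓧 : Type*} [Fintype Ω] [Fintype 𝓧] (p : Ω → ℝ) (hp : IsProb p)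
    (X : Ω → 𝓧) (Z D0 D1 Y0 Y1 : Ω → ℝ)
    (hZ : ∀ ω, Z ω = 0 ∨ Z ω = 1)
    (hD0 : ∀ ω, D0 ω = 0 ∨ D0 ω = 1) (hD1 : ∀ ω, D1 ω = 0 ∨ D1 ω = 1)
    (hindep : ∀ (x : 𝓧) (y0 y1 d0 d1 z : ℝ),
      pprob p (fun ω => X ω = x ∧ Y0 ω = y0 ∧ Y1 ω = y1 ∧ D0 ω = d0 ∧ D1 ω = d1 ∧ Z ω = z) *
          pprob p (fun ω => X ω = x)
        = pprob p (fun ω => X ω = x ∧ Y0 ω = y0 ∧ Y1 ω = y1 ∧ D0 ω = d0 ∧ D1 ω = d1) *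
            pprob p (fun ω => X ω = x ∧ Z ω = z))
    (hrel : ∀ x : 𝓧, 0 < pprob p (fun ω => X ω = x) →
      0 < cprob p (fun ω => Z ω = 1) (fun ω => X ω = x) ∧
      cprob p (fun ω => Z ω = 1) (fun ω => X ω = x) < 1 ∧
      0 < cprob p (fun ω => D1 ω ≠ D0 ω) (fun ω => X ω = x))
    (hmono : ∀ x : 𝓧,
      (∀ ω, 0 < p ω → X ω = x → D0 ω ≤ D1 ω) ∨
      (∀ ω, 0 < p ω → X ω = x → D1 ω ≤ D0 ω))
    (D Y : Ω → ℝ)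
    (hD : ∀ ω, D ω = if Z ω = 1 then D1 ω else D0 ω)
    (hY : ∀ ω, Y ω = if D ω = 1 then Y1 ω else Y0 ω)
    (β2SLS : ℝ)
    -- Kolesár's lemma for the saturated 2SLS specification, taken as given
    (hKolesar : β2SLS =
      pexp p (fun ω =>
          eexp p (fun ω' => X ω' = X ω)
              (fun ω' => (condMeanOn p X Z D (X ω) (Z ω') - condMean p X D (X ω)) ^ 2) *
            eexp p (fun ω' => D1 ω' ≠ D0 ω' ∧ X ω' = X ω) (fun ω' => Y1 ω' - Y0 ω')) /
        pexp p (fun ω =>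
          eexp p (fun ω' => X ω' = X ω)
              (fun ω' => (condMeanOn p X Z D (X ω) (Z ω') - condMean p X D (X ω)) ^ 2))) :
    β2SLS =
      pexp p (fun ω =>
          (cprob p (fun ω' => D1 ω' ≠ D0 ω') (fun ω' => X ω' = X ω)) ^ 2 *
            condVar p X Z (X ω) *
            eexp p (fun ω' => D1 ω' ≠ D0 ω' ∧ X ω' = X ω) (fun ω' => Y1 ω' - Y0 ω')) /
        pexp p (fun ω =>
          (cprob p (fun ω' => D1 ω' ≠ D0 ω') (fun ω' => X ω' = X ω)) ^ 2 *
            condVar p X Z (X ω)) :=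
  stmt8_general p hp X Z D0 D1 Y0 Y1 hZ hD0 hD1 hindep hmono D hD β2SLS hKolesar
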